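/- arXiv:1209.5197 — 3 statements merged into one kernel-verified Lean document; each statement's English description precedes it below -/
import Mathlib

section
/- For every positive integer k, the k-fold iterated raising operator satisfies Δ_0 ∘ R_{−2k}^k = R_{−2k}^k ∘ (Δ_{−2k} − k(k+1)) on smooth functions on the upper half-plane. -/
noncomputable section

/-- Partial derivative in the direction of the real axis (`∂/∂u`). -/
def du (f : ℂ → ℂ) (z : ℂ) : ℂ := fderiv ℝ f z 1

/-- Partial derivative in the direction of the imaginary axis (`∂/∂v`). -/
def dv (f : ℂ → ℂ) (z : ℂ) : ℂ := fderiv ℝ f z Complex.I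

/-- The weight `k` hyperbolic Laplace operator
`Δ_k = -v^2 (∂_u^2 + ∂_v^2) + i k v (∂_u + i ∂_v)`. -/
def hypLaplacian (k : ℝ) (f : ℂ → ℂ) (z : ℂ) : ℂ :=
  -(z.im : ℂ) ^ 2 * (du (du f) z + dv (dv f) z)
    + Complex.I * (k : ℂ) * (z.im : ℂ) * (du f z + Complex.I * dv f z)

/-- The weight `k` Maass raising operator `R_k = 2i ∂/∂τ + k v⁻¹`,
where `2i ∂/∂τ = i ∂_u + ∂_v`. -/
def raiseOp (k : ℝ) (f : ℂ → ℂ) (z : ℂ) : ℂ :=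
  Complex.I * du f z + dv f z + (k : ℂ) / (z.im : ℂ) * f z


/-- The iterated raising operator `R_k^n = R_{k+2(n-1)} ∘ ⋯ ∘ R_{k+2} ∘ R_k`,
with `R_k^0 = id`. -/
def raiseIter (k : ℝ) : ℕ → (ℂ → ℂ) → ℂ → ℂ
  | 0, f => f
  | n + 1, f => raiseOp (k + 2 * n) (raiseIter k n f)

open Complex
open scoped ContDiff Topology

namespace LRC

def UH : Set ℂ := {z : ℂ | 0 < z.im}

lemma isOpen_UH : IsOpen UH := isOpen_lt continuous_const Complex.continuous_im

def Smo (f : ℂ → ℂ) : Prop := ContDiffOn ℝ ∞ f UH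

lemma UH_ne {z : ℂ} (hz : z ∈ UH) : (z.im : ℂ) ≠ 0 := by
  simpa using ne_of_gt (show (0:ℝ) < z.im from hz)

lemma Smo.cAt {f : ℂ → ℂ} (hf : Smo f) {z : ℂ} (hz : z ∈ UH) : ContDiffAt ℝ ∞ f z :=
  hf.contDiffAt (isOpen_UH.mem_nhds hz)

lemma one_le_infty : (1 : WithTop ℕ∞) ≤ ∞ := by
  have : ((1:ℕ∞) : WithTop ℕ∞) ≤ ((⊤:ℕ∞) : WithTop ℕ∞) := WithTop.coe_le_coe.2 le_top
  simpa using this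

lemma two_le_infty : (2 : WithTop ℕ∞) ≤ ∞ := by
  have : ((2:ℕ∞) : WithTop ℕ∞) ≤ ((⊤:ℕ∞) : WithTop ℕ∞) := WithTop.coe_le_coe.2 le_top
  simpa using this

lemma infty_add_one : (∞ : WithTop ℕ∞) + 1 ≤ ∞ := le_of_eq (by rfl)

lemma Smo.dAt {f : ℂ → ℂ} (hf : Smo f) {z : ℂ} (hz : z ∈ UH) : DifferentiableAt ℝ f z :=
  (hf.cAt hz).differentiableAt (by simp)

/-- directional partial derivative -/
def pd (a : ℂ) (f : ℂ → ℂ) (z : ℂ) : ℂ := fderiv ℝ f z a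

lemma du_eq : du = pd 1 := rfl
lemma dv_eq : dv = pd I := rfl

lemma pd_add {f g : ℂ → ℂ} {z : ℂ} (hf : DifferentiableAt ℝ f z)
    (hg : DifferentiableAt ℝ g z) (a : ℂ) :
    pd a (fun w => f w + g w) z = pd a f z + pd a g z := by
  unfold pd; rw [fderiv_fun_add hf hg]; rfl

lemma pd_const_mul {f : ℂ → ℂ} {z : ℂ} (hf : DifferentiableAt ℝ f z) (c a : ℂ) :
    pd a (fun w => c * f w) z = c * pd a f z := by
  unfold pd; rw [fderiv_const_mul hf c]; rfl

lemma pd_mul {f g : ℂ → ℂ} {z : ℂ} (hf : DifferentiableAt ℝ f z)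
    (hg : DifferentiableAt ℝ g z) (a : ℂ) :
    pd a (fun w => f w * g w) z = pd a f z * g z + f z * pd a g z := by
  unfold pd; rw [fderiv_fun_mul hf hg]
  simp [smul_eq_mul]; ring

lemma pd_v (a : ℂ) (z : ℂ) : pd a (fun w : ℂ => (w.im : ℂ)) z = (a.im : ℂ) := by
  have h : (fun w : ℂ => (w.im : ℂ)) = ⇑(ofRealCLM.comp imCLM) := rfl
  unfold pd; rw [h, ContinuousLinearMap.fderiv]; rfl

lemma smo_v : Smo (fun w : ℂ => (w.im : ℂ)) := by
  have h : (fun w : ℂ => (w.im : ℂ)) = ⇑(ofRealCLM.comp imCLM) := rfl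
  rw [Smo, h]; exact (ofRealCLM.comp imCLM).contDiff.contDiffOn

lemma smo_invv : Smo (fun w : ℂ => ((w.im : ℂ))⁻¹) :=
  smo_v.inv fun z hz => UH_ne hz

lemma pd_invv {z : ℂ} (hz : z ∈ UH) (a : ℂ) :
    pd a (fun w : ℂ => ((w.im : ℂ))⁻¹) z = -(((z.im : ℂ))^2)⁻¹ * (a.im : ℂ) := by
  have h1 : HasFDerivAt (fun w : ℂ => (w.im : ℂ)) (ofRealCLM.comp imCLM) z :=
    (ofRealCLM.comp imCLM).hasFDerivAt
  have h2 : HasFDerivAt (fun y : ℂ => y⁻¹)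
      (((1 : ℂ →L[ℂ] ℂ).smulRight (-(((z.im : ℂ))^2)⁻¹)).restrictScalars ℝ) ((z.im : ℂ)) :=
    ((hasDerivAt_inv (UH_ne hz)).hasFDerivAt).restrictScalars ℝ
  have h3 := h2.comp z h1
  have h4 : (fun w : ℂ => ((w.im : ℂ))⁻¹) = (fun y : ℂ => y⁻¹) ∘ fun w : ℂ => (w.im : ℂ) := rfl
  unfold pd
  rw [h4, h3.fderiv]
  simp [mul_comm]

lemma Smo.pd {f : ℂ → ℂ} (hf : Smo f) (a : ℂ) : Smo (pd a f) := by
  have h := (hf.fderiv_of_isOpen isOpen_UH infty_add_one).clm_apply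
    (contDiffOn_const (c := a))
  exact h

lemma pd_congr {f g : ℂ → ℂ} {z : ℂ} (h : ∀ w ∈ UH, f w = g w) (hz : z ∈ UH) (a : ℂ) :
    pd a f z = pd a g z := by
  unfold pd
  rw [Filter.EventuallyEq.fderiv_eq ?_]
  filter_upwards [isOpen_UH.mem_nhds hz] with w hw
  exact h w hw

lemma pd_comm {f : ℂ → ℂ} (hf : Smo f) {z : ℂ} (hz : z ∈ UH) (a b : ℂ) :
    pd a (pd b f) z = pd b (pd a f) z := by
  have hsym : IsSymmSndFDerivAt ℝ f z :=
    (hf.cAt hz).isSymmSndFDerivAt (by simpa [minSmoothness_of_isRCLikeNormedField] using two_le_infty)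
  have hd : DifferentiableAt ℝ (fderiv ℝ f) z :=
    ((hf.fderiv_of_isOpen isOpen_UH infty_add_one).contDiffAt
      (isOpen_UH.mem_nhds hz)).differentiableAt (by simp)
  have key : ∀ c d : ℂ, pd c (LRC.pd d f) z = fderiv ℝ (fderiv ℝ f) z c d := by
    intro c d
    unfold pd
    have : (fun w => (fderiv ℝ f w) d) = fun w => (fderiv ℝ f w) ((fun _ => d) w) := rfl
    rw [this, fderiv_clm_apply hd (differentiableAt_const d)]
    simp
  rw [key, key, hsym.eq]


lemma smo_coef (m : ℝ) : Smo (fun w : ℂ => (m : ℂ) / (w.im : ℂ)) := by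
  simp only [div_eq_mul_inv]
  exact contDiffOn_const.mul smo_invv

lemma pd_coef (m : ℝ) {z : ℂ} (hz : z ∈ UH) (a : ℂ) :
    pd a (fun w : ℂ => (m : ℂ) / (w.im : ℂ)) z
      = -(m : ℂ) / (z.im : ℂ)^2 * (a.im : ℂ) := by
  have h : (fun w : ℂ => (m : ℂ) / (w.im : ℂ))
      = fun w : ℂ => (m : ℂ) * ((w.im : ℂ))⁻¹ := by
    funext w; rw [div_eq_mul_inv]
  rw [h, pd_const_mul (smo_invv.dAt hz), pd_invv hz]
  field_simp

lemma smo_coef2 (m : ℝ) : Smo (fun w : ℂ => (m : ℂ) / (w.im : ℂ)^2) := by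
  have h : (fun w : ℂ => (m : ℂ) / (w.im : ℂ)^2)
      = fun w : ℂ => ((m : ℂ) / (w.im : ℂ)) * (((1:ℝ):ℂ) / (w.im : ℂ)) := by
    funext w; rw [sq]; by_cases hw : (w.im : ℂ) = 0 <;> field_simp <;> simp
  rw [h]; exact (smo_coef m).mul (smo_coef 1)

lemma pd_coef2 (m : ℝ) {z : ℂ} (hz : z ∈ UH) (a : ℂ) :
    pd a (fun w : ℂ => (m : ℂ) / (w.im : ℂ)^2) z
      = -2 * (m : ℂ) / (z.im : ℂ)^3 * (a.im : ℂ) := by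
  have h : (fun w : ℂ => (m : ℂ) / (w.im : ℂ)^2)
      = fun w : ℂ => ((m : ℂ) / (w.im : ℂ)) * (((1:ℝ):ℂ) / (w.im : ℂ)) := by
    funext w; rw [sq]; by_cases hw : (w.im : ℂ) = 0 <;> field_simp <;> simp
  rw [h, pd_mul ((smo_coef m).dAt hz) ((smo_coef 1).dAt hz), pd_coef m hz, pd_coef 1 hz]
  have hv := UH_ne hz
  field_simp
  push_cast
  ring

lemma smo_negsq : Smo (fun w : ℂ => -((w.im : ℂ))^2) := by
  have h : (fun w : ℂ => -((w.im : ℂ))^2)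
      = fun w : ℂ => (-1 : ℂ) * ((w.im : ℂ) * (w.im : ℂ)) := by
    funext w; rw [sq]; ring
  rw [h]; exact contDiffOn_const.mul (smo_v.mul smo_v)

lemma pd_negsq {z : ℂ} (hz : z ∈ UH) (a : ℂ) :
    pd a (fun w : ℂ => -((w.im : ℂ))^2) z = -2 * (z.im : ℂ) * (a.im : ℂ) := by
  have h : (fun w : ℂ => -((w.im : ℂ))^2)
      = fun w : ℂ => (-1 : ℂ) * ((w.im : ℂ) * (w.im : ℂ)) := by
    funext w; rw [sq]; ring
  rw [h, pd_const_mul ((show Smo _ from smo_v.mul smo_v).dAt hz), pd_mul (smo_v.dAt hz) (smo_v.dAt hz),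
    pd_v]
  ring

lemma smo_lin (m : ℝ) : Smo (fun w : ℂ => Complex.I * (m : ℂ) * (w.im : ℂ)) :=
  contDiffOn_const.mul smo_v

lemma pd_lin (m : ℝ) {z : ℂ} (a : ℂ) :
    pd a (fun w : ℂ => Complex.I * (m : ℂ) * (w.im : ℂ)) z
      = Complex.I * (m : ℂ) * (a.im : ℂ) := by
  have h : (fun w : ℂ => Complex.I * (m : ℂ) * (w.im : ℂ))
      = fun w : ℂ => (Complex.I * (m : ℂ)) * ((fun w : ℂ => (w.im : ℂ)) w) := rfl
  rw [h, pd_const_mul (by exact (ofRealCLM.comp imCLM).differentiableAt (𝕜 := ℝ)), pd_v]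

/-- derivative of the 3-term combination `I•A + B + (m/v)•C`. -/
lemma pd_combo3 {A B C : ℂ → ℂ} {z : ℂ} (hA : DifferentiableAt ℝ A z)
    (hB : DifferentiableAt ℝ B z) (hC : DifferentiableAt ℝ C z)
    (hz : z ∈ UH) (m : ℝ) (a : ℂ) :
    pd a (fun w => Complex.I * A w + B w + (m : ℂ) / (w.im : ℂ) * C w) z
      = Complex.I * pd a A z + pd a B z + (m : ℂ) / (z.im : ℂ) * pd a C z
        - (m : ℂ) / (z.im : ℂ)^2 * (a.im : ℂ) * C z := by
  have h1 : DifferentiableAt ℝ (fun w => Complex.I * A w + B w) z :=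
    (hA.const_mul _).add hB
  have h2 : DifferentiableAt ℝ (fun w : ℂ => (m : ℂ) / (w.im : ℂ) * C w) z :=
    ((smo_coef m).dAt hz).mul hC
  rw [pd_add h1 h2, pd_add (hA.const_mul _) hB, pd_const_mul hA,
    pd_mul ((smo_coef m).dAt hz) hC, pd_coef m hz]
  ring

/-- derivative of the 4-term combination `I•A + B + (m/v)•C - (m/v²)•D`. -/
lemma pd_combo4 {A B C D : ℂ → ℂ} {z : ℂ} (hA : DifferentiableAt ℝ A z)
    (hB : DifferentiableAt ℝ B z) (hC : DifferentiableAt ℝ C z)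
    (hD : DifferentiableAt ℝ D z) (hz : z ∈ UH) (m : ℝ) (a : ℂ) :
    pd a (fun w => Complex.I * A w + B w + (m : ℂ) / (w.im : ℂ) * C w
        - (m : ℂ) / (w.im : ℂ)^2 * D w) z
      = Complex.I * pd a A z + pd a B z + (m : ℂ) / (z.im : ℂ) * pd a C z
        - (m : ℂ) / (z.im : ℂ)^2 * (a.im : ℂ) * C z
        - (m : ℂ) / (z.im : ℂ)^2 * pd a D z
        + 2 * (m : ℂ) / (z.im : ℂ)^3 * (a.im : ℂ) * D z := by
  have h1 : DifferentiableAt ℝ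
      (fun w => Complex.I * A w + B w + (m : ℂ) / (w.im : ℂ) * C w) z :=
    ((hA.const_mul _).add hB).add (((smo_coef m).dAt hz).mul hC)
  have h2 : DifferentiableAt ℝ (fun w : ℂ => (m : ℂ) / (w.im : ℂ)^2 * D w) z :=
    ((smo_coef2 m).dAt hz).mul hD
  have hsub : pd a (fun w => Complex.I * A w + B w + (m : ℂ) / (w.im : ℂ) * C w
        - (m : ℂ) / (w.im : ℂ)^2 * D w) z
      = pd a (fun w => Complex.I * A w + B w + (m : ℂ) / (w.im : ℂ) * C w) z
        - pd a (fun w : ℂ => (m : ℂ) / (w.im : ℂ)^2 * D w) z := by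
    have h3 : (fun w => Complex.I * A w + B w + (m : ℂ) / (w.im : ℂ) * C w
        - (m : ℂ) / (w.im : ℂ)^2 * D w)
        = fun w => (Complex.I * A w + B w + (m : ℂ) / (w.im : ℂ) * C w)
          + (-1 : ℂ) * ((m : ℂ) / (w.im : ℂ)^2 * D w) := by
      funext w; ring
    rw [h3, pd_add h1 (h2.const_mul _), pd_const_mul h2]
    ring
  rw [hsub, pd_combo3 hA hB hC hz, pd_mul ((smo_coef2 m).dAt hz) hD, pd_coef2 m hz]
  ring

/-- derivative of the Laplacian-shaped combination `-v²•P + (Imv)•Q`. -/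
lemma pd_lap {P Q : ℂ → ℂ} {z : ℂ} (hP : DifferentiableAt ℝ P z)
    (hQ : DifferentiableAt ℝ Q z) (hz : z ∈ UH) (m : ℝ) (a : ℂ) :
    pd a (fun w => -((w.im : ℂ))^2 * P w + Complex.I * (m : ℂ) * (w.im : ℂ) * Q w) z
      = -2 * (z.im : ℂ) * (a.im : ℂ) * P z - ((z.im : ℂ))^2 * pd a P z
        + Complex.I * (m : ℂ) * (a.im : ℂ) * Q z
        + Complex.I * (m : ℂ) * (z.im : ℂ) * pd a Q z := by
  have h1 : DifferentiableAt ℝ (fun w : ℂ => -((w.im : ℂ))^2 * P w) z :=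
    (smo_negsq.dAt hz).mul hP
  have h2 : DifferentiableAt ℝ (fun w : ℂ => Complex.I * (m : ℂ) * (w.im : ℂ) * Q w) z :=
    ((smo_lin m).dAt hz).mul hQ
  rw [pd_add h1 h2, pd_mul (smo_negsq.dAt hz) hP, pd_mul ((smo_lin m).dAt hz) hQ,
    pd_negsq hz, pd_lin m]
  ring


lemma raiseOp_def (c : ℝ) (F : ℂ → ℂ) :
    raiseOp c F = fun w => Complex.I * pd 1 F w + pd I F w + (c : ℂ) / (w.im : ℂ) * F w := rfl

lemma hypLaplacian_def (c : ℝ) (F : ℂ → ℂ) :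
    hypLaplacian c F = fun w => -((w.im : ℂ))^2 * (pd 1 (pd 1 F) w + pd I (pd I F) w)
      + Complex.I * (c : ℂ) * (w.im : ℂ) * (pd 1 F w + Complex.I * pd I F w) := rfl

lemma Smo.raiseOp {F : ℂ → ℂ} (hF : Smo F) (c : ℝ) : Smo (raiseOp c F) := by
  rw [raiseOp_def]
  exact ((contDiffOn_const.mul (hF.pd 1)).add (hF.pd I)).add ((smo_coef c).mul hF)

lemma Smo.hypL {F : ℂ → ℂ} (hF : Smo F) (c : ℝ) : Smo (hypLaplacian c F) := by
  rw [hypLaplacian_def]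
  exact (smo_negsq.mul (((hF.pd 1).pd 1).add ((hF.pd I).pd I))).add
    ((smo_lin c).mul ((hF.pd 1).add (contDiffOn_const.mul (hF.pd I))))

lemma step (m : ℝ) {g : ℂ → ℂ} (hg : Smo g) {z : ℂ} (hz : z ∈ UH) :
    hypLaplacian (m + 2) (raiseOp m g) z
      = raiseOp m (fun w => hypLaplacian m g w + (m : ℂ) * g w) z := by
  have hv := UH_ne hz
  have hg1 : Smo (pd 1 g) := hg.pd 1
  have hgI : Smo (pd I g) := hg.pd I
  have hg11 : Smo (pd 1 (pd 1 g)) := hg1.pd 1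
  have hg1I : Smo (pd 1 (pd I g)) := hgI.pd 1
  have hgII : Smo (pd I (pd I g)) := hgI.pd I
  -- first derivatives of R := raiseOp m g, pointwise on UH
  have hRu : ∀ w ∈ UH, pd 1 (raiseOp m g) w
      = Complex.I * pd 1 (pd 1 g) w + pd 1 (pd I g) w
        + (m : ℂ) / (w.im : ℂ) * pd 1 g w := by
    intro w hw
    rw [raiseOp_def, pd_combo3 (hg1.dAt hw) (hgI.dAt hw) (hg.dAt hw) hw m 1,
      pd_comm hg hw 1 I]
    simp
  have hRv : ∀ w ∈ UH, pd I (raiseOp m g) w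
      = Complex.I * pd 1 (pd I g) w + pd I (pd I g) w
        + (m : ℂ) / (w.im : ℂ) * pd I g w - (m : ℂ) / (w.im : ℂ)^2 * g w := by
    intro w hw
    rw [raiseOp_def, pd_combo3 (hg1.dAt hw) (hgI.dAt hw) (hg.dAt hw) hw m I,
      pd_comm hg hw I 1]
    simp
  -- second derivatives at z
  have hRuu : pd 1 (pd 1 (raiseOp m g)) z
      = Complex.I * pd 1 (pd 1 (pd 1 g)) z + pd 1 (pd 1 (pd I g)) z
        + (m : ℂ) / (z.im : ℂ) * pd 1 (pd 1 g) z := by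
    rw [pd_congr hRu hz 1,
      pd_combo3 (hg11.dAt hz) (hg1I.dAt hz) (hg1.dAt hz) hz m 1]
    simp
  have hRvv : pd I (pd I (raiseOp m g)) z
      = Complex.I * pd 1 (pd I (pd I g)) z + pd I (pd I (pd I g)) z
        + (m : ℂ) / (z.im : ℂ) * pd I (pd I g) z
        - 2 * ((m : ℂ) / (z.im : ℂ)^2) * pd I g z
        + 2 * (m : ℂ) / (z.im : ℂ)^3 * g z := by
    rw [pd_congr hRv hz I,
      pd_combo4 (hg1I.dAt hz) (hgII.dAt hz) (hgI.dAt hz) (hg.dAt hz) hz m I,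
      pd_comm hgI hz I 1]
    simp
    ring
  -- derivatives of the Laplacian
  have hP : DifferentiableAt ℝ (fun w => pd 1 (pd 1 g) w + pd I (pd I g) w) z :=
    (hg11.dAt hz).add (hgII.dAt hz)
  have hQ : DifferentiableAt ℝ (fun w => pd 1 g w + Complex.I * pd I g w) z :=
    (hg1.dAt hz).add ((hgI.dAt hz).const_mul _)
  have hLu : pd 1 (hypLaplacian m g) z
      = -((z.im : ℂ))^2 * (pd 1 (pd 1 (pd 1 g)) z + pd 1 (pd I (pd I g)) z)
        + Complex.I * (m : ℂ) * (z.im : ℂ)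
          * (pd 1 (pd 1 g) z + Complex.I * pd 1 (pd I g) z) := by
    rw [hypLaplacian_def,
      pd_lap (P := fun w => pd 1 (pd 1 g) w + pd I (pd I g) w)
        (Q := fun w => pd 1 g w + Complex.I * pd I g w) hP hQ hz m 1,
      pd_add (hg11.dAt hz) (hgII.dAt hz) 1,
      pd_add (hg1.dAt hz) ((hgI.dAt hz).const_mul _) 1,
      pd_const_mul (hgI.dAt hz) Complex.I 1]
    simp
  have hLv : pd I (hypLaplacian m g) z
      = -2 * (z.im : ℂ) * (pd 1 (pd 1 g) z + pd I (pd I g) z)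
        - ((z.im : ℂ))^2 * (pd 1 (pd 1 (pd I g)) z + pd I (pd I (pd I g)) z)
        + Complex.I * (m : ℂ) * (pd 1 g z + Complex.I * pd I g z)
        + Complex.I * (m : ℂ) * (z.im : ℂ)
          * (pd 1 (pd I g) z + Complex.I * pd I (pd I g) z) := by
    rw [hypLaplacian_def,
      pd_lap (P := fun w => pd 1 (pd 1 g) w + pd I (pd I g) w)
        (Q := fun w => pd 1 g w + Complex.I * pd I g w) hP hQ hz m I,
      pd_add (hg11.dAt hz) (hgII.dAt hz) I,
      pd_add (hg1.dAt hz) ((hgI.dAt hz).const_mul _) I,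
      pd_const_mul (hgI.dAt hz) Complex.I I,
      pd_comm hg1 hz I 1,
      pd_congr (fun w hw => pd_comm hg hw I 1) hz 1,
      pd_comm hg hz I 1]
    simp
  -- assemble
  have hH1 : DifferentiableAt ℝ (hypLaplacian m g) z := (hg.hypL m).dAt hz
  have hH2 : DifferentiableAt ℝ (fun w => (m : ℂ) * g w) z := (hg.dAt hz).const_mul _
  rw [hypLaplacian_def (m + 2) (raiseOp m g),
    raiseOp_def m (fun w => hypLaplacian m g w + (m : ℂ) * g w)]
  simp only
  rw [hRuu, hRvv, hRu z hz, hRv z hz,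
    pd_add hH1 hH2 1, pd_add hH1 hH2 I,
    pd_const_mul (hg.dAt hz) (m : ℂ) 1, pd_const_mul (hg.dAt hz) (m : ℂ) I,
    hLu, hLv, hypLaplacian_def m g]
  simp only
  push_cast
  simp only [div_eq_mul_inv, ← inv_pow]
  have hu : (z.im : ℂ) * (z.im : ℂ)⁻¹ = 1 := mul_inv_cancel₀ hv
  linear_combination ((2 * Complex.I * (m : ℂ) * pd 1 g z) + ((z.im : ℂ)⁻¹ * (m : ℂ) ^ 2 * g z) + (2 * (z.im : ℂ) * (z.im : ℂ)⁻¹ * (m : ℂ) * pd Complex.I g z) + ((-2) * (z.im : ℂ) * (z.im : ℂ)⁻¹ ^ 2 * (m : ℂ) * g z)) * hu + (((-1) * (m : ℂ) * pd Complex.I g z) + (2 * (z.im : ℂ) * pd Complex.I (pd Complex.I g) z) + (2 * (z.im : ℂ) * pd 1 (pd 1 g) z) + (2 * (z.im : ℂ) * Complex.I * pd 1 (pd Complex.I g) z) + (2 * (z.im : ℂ) * (z.im : ℂ)⁻¹ * (m : ℂ) * pd Complex.I g z) + ((-2) * (z.im : ℂ) * (z.im : ℂ)⁻¹ ^ 2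 * (m : ℂ) * g z) + ((-1) * (z.im : ℂ) * (z.im : ℂ)⁻¹ ^ 2 * (m : ℂ) ^ 2 * g z)) * Complex.I_sq

lemma raiseOp_congr {F G : ℂ → ℂ} (c : ℝ) (h : ∀ w ∈ UH, F w = G w) {z : ℂ}
    (hz : z ∈ UH) : raiseOp c F z = raiseOp c G z := by
  simp only [raiseOp_def]
  rw [pd_congr h hz 1, pd_congr h hz I, h z hz]

lemma raiseOp_addsmul (c : ℝ) {F G : ℂ → ℂ} {z : ℂ} (hF : DifferentiableAt ℝ F z)
    (hG : DifferentiableAt ℝ G z) (a : ℂ) (hz : z ∈ UH) :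
    raiseOp c (fun w => F w + a * G w) z = raiseOp c F z + a * raiseOp c G z := by
  simp only [raiseOp_def]
  rw [pd_add hF (hG.const_mul a) 1, pd_add hF (hG.const_mul a) I,
    pd_const_mul hG a 1, pd_const_mul hG a I]
  ring

lemma Smo.raiseIter {F : ℂ → ℂ} (hF : Smo F) (c : ℝ) : ∀ n, Smo (raiseIter c n F)
  | 0 => hF
  | n + 1 => (Smo.raiseIter hF c n).raiseOp _

lemma raiseIter_addsmul (c : ℝ) (a : ℂ) :
    ∀ (n : ℕ) {F G : ℂ → ℂ}, Smo F → Smo G → ∀ z ∈ UH,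
      raiseIter c n (fun w => F w + a * G w) z
        = raiseIter c n F z + a * raiseIter c n G z := by
  intro n
  induction n with
  | zero => intro F G _ _ z _; rfl
  | succ n ih =>
    intro F G hF hG z hz
    show raiseOp (c + 2 * n) (raiseIter c n fun w => F w + a * G w) z = _
    rw [raiseOp_congr (c + 2 * n)
      (fun w hw => ih hF hG w hw) hz,
      raiseOp_addsmul (c + 2 * n) ((hF.raiseIter c n).dAt hz)
        ((hG.raiseIter c n).dAt hz) a hz]
    rfl

lemma key (c : ℝ) {f : ℂ → ℂ} (hf : Smo f) :
    ∀ (n : ℕ), ∀ z ∈ UH,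
      hypLaplacian (c + 2 * n) (raiseIter c n f) z
        = raiseIter c n
            (fun w => hypLaplacian c f w
              + ((n : ℂ) * (c : ℂ) + (n : ℂ) * ((n : ℂ) - 1)) * f w) z := by
  intro n
  induction n with
  | zero =>
    intro z _
    show hypLaplacian (c + 2 * (0:ℕ)) f z = hypLaplacian c f z + _ * f z
    norm_num
  | succ n ih =>
    intro z hz
    have hRn : Smo (raiseIter c n f) := hf.raiseIter c n
    have h1 : hypLaplacian (c + 2 * ((n : ℕ) + 1 : ℕ)) (raiseIter c (n+1) f) z
        = hypLaplacian ((c + 2 * n) + 2) (raiseOp (c + 2 * n) (raiseIter c n f)) z := by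
      have : (c + 2 * (((n : ℕ) + 1 : ℕ) : ℝ)) = (c + 2 * (n : ℝ)) + 2 := by
        push_cast; ring
      rw [this]; rfl
    rw [h1, step (c + 2 * n) hRn hz]
    have h2 : ∀ w ∈ UH,
        (fun w => hypLaplacian (c + 2 * n) (raiseIter c n f) w
          + ((c + 2 * (n:ℝ) : ℝ) : ℂ) * raiseIter c n f w) w
        = raiseIter c n
            (fun w => (fun w' => hypLaplacian c f w'
                + ((n : ℂ) * (c : ℂ) + (n : ℂ) * ((n : ℂ) - 1)) * f w') w
              + ((c + 2 * (n:ℝ) : ℝ) : ℂ) * f w) w := by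
      intro w hw
      simp only
      rw [ih w hw, ← raiseIter_addsmul c (((c + 2 * (n:ℝ) : ℝ) : ℂ)) n
        ((hf.hypL c).add (contDiffOn_const.mul hf)) hf w hw]
    have h3 : (fun w => (fun w' => hypLaplacian c f w'
                + ((n : ℂ) * (c : ℂ) + (n : ℂ) * ((n : ℂ) - 1)) * f w') w
              + ((c + 2 * (n:ℝ) : ℝ) : ℂ) * f w)
        = (fun w => hypLaplacian c f w
              + ((((n:ℕ)+1 : ℕ) : ℂ) * (c : ℂ)
                + (((n:ℕ)+1 : ℕ) : ℂ) * ((((n:ℕ)+1 : ℕ) : ℂ) - 1)) * f w) := by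
      funext w
      push_cast
      ring
    have h4 : raiseOp (c + 2 * n)
        (fun w => hypLaplacian (c + 2 * n) (raiseIter c n f) w
          + ((c + 2 * (n:ℝ) : ℝ) : ℂ) * raiseIter c n f w) z
        = raiseOp (c + 2 * n)
            (raiseIter c n (fun w => hypLaplacian c f w
              + ((((n:ℕ)+1 : ℕ) : ℂ) * (c : ℂ)
                + (((n:ℕ)+1 : ℕ) : ℂ) * ((((n:ℕ)+1 : ℕ) : ℂ) - 1)) * f w)) z := by
      refine raiseOp_congr _ (fun w hw => ?_) hz
      have := h2 w hw
      simp only at this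
      rw [this, ← h3]
    rw [h4]
    rfl

end LRC

/-- `Δ_0 ∘ R_{-2k}^k = R_{-2k}^k ∘ (Δ_{-2k} - k(k+1))` on smooth functions
on the upper half-plane. -/
theorem laplacian_raiseIter_commutation (k : ℕ) (hk : 0 < k) (f : ℂ → ℂ)
    (hf : ContDiff ℝ (⊤ : ℕ∞) f) (z : ℂ) (hz : 0 < z.im) :
    hypLaplacian 0 (raiseIter (-2 * (k : ℝ)) k f) z
      = raiseIter (-2 * (k : ℝ)) k
          (fun w => hypLaplacian (-2 * (k : ℝ)) f w - (k : ℂ) * ((k : ℂ) + 1) * f w) z := by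
  have hf' : LRC.Smo f := (hf.of_le (by simp)).contDiffOn
  have hz' : z ∈ LRC.UH := hz
  have h := LRC.key (-2 * (k : ℝ)) hf' k z hz'
  rw [show (-2 * (k : ℝ) + 2 * (k : ℝ)) = 0 from by ring] at h
  rw [show (fun w => hypLaplacian (-2 * (k : ℝ)) f w
      + ((k : ℂ) * ((-2 * (k : ℝ) : ℝ) : ℂ) + (k : ℂ) * ((k : ℂ) - 1)) * f w)
      = (fun w => hypLaplacian (-2 * (k : ℝ)) f w - (k : ℂ) * ((k : ℂ) + 1) * f w) from by
    funext w; push_cast; ring] at h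
  exact h
end
end

section
/- For every even positive integer k, the iterated raising operator satisfies Δ_{3/2+k} ∘ R_{3/2}^{k/2} = R_{3/2}^{k/2} ∘ (Δ_{3/2} + (k/4)(k+1)) on smooth functions on the upper half-plane. -/
noncomputable section

open Complex Filter Topology

abbrev NN : WithTop ℕ∞ := ((⊤ : ℕ∞) : WithTop ℕ∞)

lemma one_le_NN : (1:WithTop ℕ∞) ≤ NN := by
  rw [show (1:WithTop ℕ∞) = ((1:ℕ∞):WithTop ℕ∞) by rfl]
  exact WithTop.coe_le_coe.2 le_top
lemma two_le_NN : (2:WithTop ℕ∞) ≤ NN := by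
  rw [show (2:WithTop ℕ∞) = ((2:ℕ∞):WithTop ℕ∞) by rfl]
  exact WithTop.coe_le_coe.2 le_top

lemma du_congr {f g : ℂ → ℂ} {z : ℂ} (h : f =ᶠ[nhds z] g) : du f z = du g z := by
  unfold du; rw [h.fderiv_eq]

lemma dv_congr {f g : ℂ → ℂ} {z : ℂ} (h : f =ᶠ[nhds z] g) : dv f z = dv g z := by
  unfold dv; rw [h.fderiv_eq]

lemma upper_open : IsOpen {w : ℂ | 0 < w.im} := isOpen_lt continuous_const Complex.continuous_im

lemma eventually_upper {z : ℂ} (hz : 0 < z.im) : ∀ᶠ w in nhds z, 0 < w.im :=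
  upper_open.mem_nhds hz

lemma du_congr_upper {f g : ℂ → ℂ} {z : ℂ} (hz : 0 < z.im)
    (h : ∀ w, 0 < w.im → f w = g w) : du f z = du g z :=
  du_congr ((eventually_upper hz).mono h)

lemma dv_congr_upper {f g : ℂ → ℂ} {z : ℂ} (hz : 0 < z.im)
    (h : ∀ w, 0 < w.im → f w = g w) : dv f z = dv g z :=
  dv_congr ((eventually_upper hz).mono h)

lemma du_add {f g : ℂ → ℂ} {z : ℂ} (hf : DifferentiableAt ℝ f z)
    (hg : DifferentiableAt ℝ g z) :
    du (fun w => f w + g w) z = du f z + du g z := by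
  unfold du; rw [fderiv_fun_add hf hg]; simp

lemma dv_add {f g : ℂ → ℂ} {z : ℂ} (hf : DifferentiableAt ℝ f z)
    (hg : DifferentiableAt ℝ g z) :
    dv (fun w => f w + g w) z = dv f z + dv g z := by
  unfold dv; rw [fderiv_fun_add hf hg]; simp

lemma du_cmul {f : ℂ → ℂ} {z : ℂ} (c : ℂ) (hf : DifferentiableAt ℝ f z) :
    du (fun w => c * f w) z = c * du f z := by
  unfold du; rw [fderiv_const_mul hf c]; simp

lemma dv_cmul {f : ℂ → ℂ} {z : ℂ} (c : ℂ) (hf : DifferentiableAt ℝ f z) :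
    dv (fun w => c * f w) z = c * dv f z := by
  unfold dv; rw [fderiv_const_mul hf c]; simp

lemma du_mul {f g : ℂ → ℂ} {z : ℂ} (hf : DifferentiableAt ℝ f z)
    (hg : DifferentiableAt ℝ g z) :
    du (fun w => f w * g w) z = du f z * g z + f z * du g z := by
  unfold du; rw [fderiv_fun_mul hf hg]; simp [smul_eq_mul]; ring

lemma dv_mul {f g : ℂ → ℂ} {z : ℂ} (hf : DifferentiableAt ℝ f z)
    (hg : DifferentiableAt ℝ g z) :
    dv (fun w => f w * g w) z = dv f z * g z + f z * dv g z := by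
  unfold dv; rw [fderiv_fun_mul hf hg]; simp [smul_eq_mul]; ring

lemma du_mul3 {f g h : ℂ → ℂ} {z : ℂ} (hf : DifferentiableAt ℝ f z)
    (hg : DifferentiableAt ℝ g z) (hh : DifferentiableAt ℝ h z) :
    du (fun w => f w * g w * h w) z
      = du f z * g z * h z + f z * du g z * h z + f z * g z * du h z := by
  rw [du_mul (hf.fun_mul hg) hh, du_mul hf hg]; ring

lemma dv_mul3 {f g h : ℂ → ℂ} {z : ℂ} (hf : DifferentiableAt ℝ f z)
    (hg : DifferentiableAt ℝ g z) (hh : DifferentiableAt ℝ h z) :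
    dv (fun w => f w * g w * h w) z
      = dv f z * g z * h z + f z * dv g z * h z + f z * g z * dv h z := by
  rw [dv_mul (hf.fun_mul hg) hh, dv_mul hf hg]; ring

/-! ### the coordinate functions -/

lemma hasFDerivAt_imc (z : ℂ) :
    HasFDerivAt (fun w : ℂ => (w.im : ℂ)) (Complex.ofRealCLM.comp Complex.imCLM) z :=
  Complex.ofRealCLM.hasFDerivAt.comp z Complex.imCLM.hasFDerivAt

lemma du_imc (z : ℂ) : du (fun w : ℂ => (w.im : ℂ)) z = 0 := by
  unfold du; rw [(hasFDerivAt_imc z).fderiv]; simp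

lemma dv_imc (z : ℂ) : dv (fun w : ℂ => (w.im : ℂ)) z = 1 := by
  unfold dv; rw [(hasFDerivAt_imc z).fderiv]; simp

lemma diff_imc (z : ℂ) : DifferentiableAt ℝ (fun w : ℂ => (w.im : ℂ)) z :=
  (hasFDerivAt_imc z).differentiableAt

lemma cd_imc (z : ℂ) : ContDiffAt ℝ NN (fun w : ℂ => (w.im : ℂ)) z :=
  ((Complex.ofRealCLM.contDiff.comp Complex.imCLM.contDiff).of_le le_top).contDiffAt

lemma hasFDerivAt_iv {z : ℂ} (hz : z.im ≠ 0) :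
    HasFDerivAt (fun w : ℂ => ((w.im : ℂ))⁻¹)
      (Complex.ofRealCLM.comp ((-(z.im ^ 2)⁻¹ : ℝ) • Complex.imCLM)) z := by
  have h1 : HasFDerivAt (fun w : ℂ => (w.im)⁻¹) ((-(z.im ^ 2)⁻¹ : ℝ) • Complex.imCLM) z :=
    (hasDerivAt_inv hz).comp_hasFDerivAt z Complex.imCLM.hasFDerivAt
  have h2 := Complex.ofRealCLM.hasFDerivAt.comp z h1
  convert h2 using 1
  ext w
  simp [Function.comp]
  · rfl
  · funext w; simp

lemma du_iv {z : ℂ} (hz : z.im ≠ 0) : du (fun w : ℂ => ((w.im : ℂ))⁻¹) z = 0 := by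
  unfold du; rw [(hasFDerivAt_iv hz).fderiv]; simp

lemma dv_iv {z : ℂ} (hz : z.im ≠ 0) :
    dv (fun w : ℂ => ((w.im : ℂ))⁻¹) z = -(((z.im : ℂ))⁻¹ * ((z.im : ℂ))⁻¹) := by
  unfold dv; rw [(hasFDerivAt_iv hz).fderiv]
  simp [smul_eq_mul]
  rw [sq]
  push_cast [mul_inv]
  ring

lemma diff_iv {z : ℂ} (hz : z.im ≠ 0) :
    DifferentiableAt ℝ (fun w : ℂ => ((w.im : ℂ))⁻¹) z :=
  (hasFDerivAt_iv hz).differentiableAt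

lemma cd_iv {z : ℂ} (hz : z.im ≠ 0) :
    ContDiffAt ℝ NN (fun w : ℂ => ((w.im : ℂ))⁻¹) z :=
  (cd_imc z).inv (by simpa using hz)

/-! ### smoothness of the partial derivative operators -/

lemma ContDiffAt.du' {f : ℂ → ℂ} {z : ℂ} (hf : ContDiffAt ℝ NN f z) :
    ContDiffAt ℝ NN (du f) z := by
  have h := hf.fderiv_right (m := NN) (by norm_num)
  exact ((ContinuousLinearMap.apply ℝ ℂ (1 : ℂ)).contDiff.of_le le_top).contDiffAt.comp z h

lemma ContDiffAt.dv' {f : ℂ → ℂ} {z : ℂ} (hf : ContDiffAt ℝ NN f z) :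
    ContDiffAt ℝ NN (dv f) z := by
  have h := hf.fderiv_right (m := NN) (by norm_num)
  exact ((ContinuousLinearMap.apply ℝ ℂ Complex.I).contDiff.of_le le_top).contDiffAt.comp z h

lemma ContDiffAt.diff {f : ℂ → ℂ} {z : ℂ} (hf : ContDiffAt ℝ NN f z) :
    DifferentiableAt ℝ f z :=
  hf.differentiableAt (by norm_num)

/-! ### Schwarz symmetry -/

lemma du_dv_comm {f : ℂ → ℂ} {z : ℂ} (hf : ContDiffAt ℝ NN f z) :
    du (dv f) z = dv (du f) z := by
  have hs := hf.isSymmSndFDerivAt (n := NN) (by rw [minSmoothness_of_isRCLikeNormedField]; exact two_le_NN)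
  have hD : DifferentiableAt ℝ (fderiv ℝ f) z :=
    (hf.fderiv_right (m := NN) (by norm_num)).differentiableAt (by norm_num)
  have key : ∀ v : ℂ, fderiv ℝ (fun w => fderiv ℝ f w v) z
      = (ContinuousLinearMap.apply ℝ ℂ v).comp (fderiv ℝ (fderiv ℝ f) z) := by
    intro v
    exact ((ContinuousLinearMap.apply ℝ ℂ v).hasFDerivAt.comp z hD.hasFDerivAt).fderiv
  have h1 : du (dv f) z = fderiv ℝ (fderiv ℝ f) z 1 Complex.I := by
    show fderiv ℝ (fun w => fderiv ℝ f w Complex.I) z 1 = _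
    rw [key]; rfl
  have h2 : dv (du f) z = fderiv ℝ (fderiv ℝ f) z Complex.I 1 := by
    show fderiv ℝ (fun w => fderiv ℝ f w 1) z Complex.I = _
    rw [key]; rfl
  rw [h1, h2, hs]
lemma du_sub {f g : ℂ → ℂ} {z : ℂ} (hf : DifferentiableAt ℝ f z)
    (hg : DifferentiableAt ℝ g z) :
    du (fun w => f w - g w) z = du f z - du g z := by
  unfold du; rw [fderiv_fun_sub hf hg]; simp

lemma dv_sub {f g : ℂ → ℂ} {z : ℂ} (hf : DifferentiableAt ℝ f z)
    (hg : DifferentiableAt ℝ g z) :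
    dv (fun w => f w - g w) z = dv f z - dv g z := by
  unfold dv; rw [fderiv_fun_sub hf hg]; simp

def Sm (f : ℂ → ℂ) : Prop := ∀ w : ℂ, 0 < w.im → ContDiffAt ℝ NN f w

lemma Sm.du' {f : ℂ → ℂ} (hf : Sm f) : Sm (du f) := fun w hw => (hf w hw).du'
lemma Sm.dv' {f : ℂ → ℂ} (hf : Sm f) : Sm (dv f) := fun w hw => (hf w hw).dv'

lemma raiseOp_eq (k : ℝ) (f : ℂ → ℂ) :
    raiseOp k f
      = fun w => Complex.I * du f w + dv f w + (k : ℂ) * (((w.im : ℂ))⁻¹ * f w) := by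
  funext w; unfold raiseOp; rw [div_eq_mul_inv]; ring

lemma Sm.raiseOp' {f : ℂ → ℂ} (hf : Sm f) (k : ℝ) : Sm (raiseOp k f) := by
  intro w hw
  rw [raiseOp_eq]
  exact ((contDiffAt_const.mul (hf.du' w hw)).add (hf.dv' w hw)).add
    (contDiffAt_const.mul ((cd_iv hw.ne').mul (hf w hw)))

lemma Sm.raiseIter' {f : ℂ → ℂ} (hf : Sm f) (k : ℝ) : ∀ n, Sm (raiseIter k n f)
  | 0 => hf
  | (n+1) => (Sm.raiseIter' hf k n).raiseOp' _

lemma duR {f : ℂ → ℂ} {w : ℂ} (k : ℝ) (hf : Sm f) (hw : 0 < w.im) :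
    du (raiseOp k f) w
      = Complex.I * du (du f) w + dv (du f) w
        + (k : ℂ) * (((w.im : ℂ))⁻¹ * du f w) := by
  have h0 := hf w hw
  have dduf := (h0.du').diff
  have ddvf := (h0.dv').diff
  have dIduf : DifferentiableAt ℝ (fun x => Complex.I * du f x) w := dduf.const_mul _
  have dif := diff_iv hw.ne'
  have dprod : DifferentiableAt ℝ (fun x : ℂ => ((x.im : ℂ))⁻¹ * f x) w := dif.mul h0.diff
  rw [raiseOp_eq]
  rw [du_add (dIduf.fun_add ddvf) (dprod.const_mul _), du_add dIduf ddvf,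
      du_cmul _ dduf, du_cmul _ dprod, du_mul dif h0.diff, du_iv hw.ne',
      du_dv_comm h0]
  ring

lemma dvR {f : ℂ → ℂ} {w : ℂ} (k : ℝ) (hf : Sm f) (hw : 0 < w.im) :
    dv (raiseOp k f) w
      = Complex.I * dv (du f) w + dv (dv f) w
        + (k : ℂ) * (((w.im : ℂ))⁻¹ * dv f w
            - ((w.im : ℂ))⁻¹ * ((w.im : ℂ))⁻¹ * f w) := by
  have h0 := hf w hw
  have dduf := (h0.du').diff
  have ddvf := (h0.dv').diff
  have dIduf : DifferentiableAt ℝ (fun x => Complex.I * du f x) w := dduf.const_mul _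
  have dif := diff_iv hw.ne'
  have dprod : DifferentiableAt ℝ (fun x : ℂ => ((x.im : ℂ))⁻¹ * f x) w := dif.mul h0.diff
  rw [raiseOp_eq]
  rw [dv_add (dIduf.fun_add ddvf) (dprod.const_mul _), dv_add dIduf ddvf,
      dv_cmul _ dduf, dv_cmul _ dprod, dv_mul dif h0.diff, dv_iv hw.ne']
  ring
set_option maxHeartbeats 2000000 in
lemma step (k : ℝ) {f : ℂ → ℂ} (hf : Sm f) {z : ℂ} (hz : 0 < z.im) :
    hypLaplacian (k + 2) (raiseOp k f) z
      = raiseOp k (fun w => hypLaplacian k f w + (k : ℂ) * f w) z := by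
  have hv : ((z.im : ℂ)) ≠ 0 := Complex.ofReal_ne_zero.mpr hz.ne'
  have h0 := hf z hz
  have h1 := h0.du'
  have h2 := h0.dv'
  have h11 := h1.du'
  have h12 := h1.dv'
  have h22 := h2.dv'
  have d0 := h0.diff
  have d1 := h1.diff
  have d2 := h2.diff
  have d11 := h11.diff
  have d12 := h12.diff
  have d22 := h22.diff
  have dif := diff_iv hz.ne'
  have dimc := diff_imc z
  -- Schwarz-type reductions
  have e1 : du (dv (dv f)) z = dv (dv (du f)) z := by
    rw [du_dv_comm h2]; exact dv_congr_upper hz fun w hw => du_dv_comm (hf w hw)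
  -- second derivatives of the raised function
  have Edu2 : du (du (raiseOp k f)) z
      = Complex.I * du (du (du f)) z + dv (du (du f)) z
        + (k : ℂ) * (((z.im : ℂ))⁻¹ * du (du f) z) := by
    rw [du_congr_upper hz (fun w hw => duR k hf hw)]
    rw [du_add ((d11.const_mul _).fun_add d12) ((dif.fun_mul d1).const_mul _),
        du_add (d11.const_mul _) d12,
        du_cmul _ d11, du_cmul _ (dif.fun_mul d1), du_mul dif d1, du_iv hz.ne',
        du_dv_comm h1]
    ring
  have Edv2 : dv (dv (raiseOp k f)) z
      = Complex.I * dv (dv (du f)) z + dv (dv (dv f)) z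
        + (k : ℂ) * (((z.im : ℂ))⁻¹ * dv (dv f) z
            - 2 * ((z.im : ℂ))⁻¹ * ((z.im : ℂ))⁻¹ * dv f z
            + 2 * ((z.im : ℂ))⁻¹ * ((z.im : ℂ))⁻¹ * ((z.im : ℂ))⁻¹ * f z) := by
    rw [dv_congr_upper hz (fun w hw => dvR k hf hw)]
    rw [dv_add ((d12.const_mul _).fun_add d22)
          (((dif.fun_mul d2).fun_sub ((dif.fun_mul dif).fun_mul d0)).const_mul _),
        dv_add (d12.const_mul _) d22,
        dv_cmul _ d12, dv_cmul _ ((dif.fun_mul d2).fun_sub ((dif.fun_mul dif).fun_mul d0)),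
        dv_sub (dif.fun_mul d2) ((dif.fun_mul dif).fun_mul d0),
        dv_mul dif d2, dv_mul3 dif dif d0, dv_iv hz.ne']
    ring
  -- derivatives of the shifted Laplacian
  have EduH : du (fun w => hypLaplacian k f w + (k : ℂ) * f w) z
      = -((z.im : ℂ) * (z.im : ℂ) * (du (du (du f)) z + dv (dv (du f)) z))
        + Complex.I * (k : ℂ) * ((z.im : ℂ) * (du (du f) z + Complex.I * dv (du f) z))
        + (k : ℂ) * du f z := by
    have hH : (fun w => hypLaplacian k f w + (k : ℂ) * f w)
        = fun w => (-1 : ℂ) * ((w.im : ℂ) * (w.im : ℂ) * (du (du f) w + dv (dv f) w))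
            + (Complex.I * (k : ℂ)) * ((w.im : ℂ) * (du f w + Complex.I * dv f w))
            + (k : ℂ) * f w := by
      funext w; unfold hypLaplacian; ring
    rw [hH]
    rw [du_add (((((dimc.fun_mul dimc).fun_mul (d11.fun_add d22)).const_mul _)).fun_add
          ((dimc.fun_mul (d1.fun_add (d2.const_mul _))).const_mul _)) (d0.const_mul _),
        du_add (((dimc.fun_mul dimc).fun_mul (d11.fun_add d22)).const_mul _)
          ((dimc.fun_mul (d1.fun_add (d2.const_mul _))).const_mul _),
        du_cmul _ ((dimc.fun_mul dimc).fun_mul (d11.fun_add d22)),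
        du_mul3 dimc dimc (d11.fun_add d22),
        du_add d11 d22,
        du_cmul _ (dimc.fun_mul (d1.fun_add (d2.const_mul _))),
        du_mul dimc (d1.fun_add (d2.const_mul _)),
        du_add d1 (d2.const_mul _),
        du_cmul _ d2,
        du_cmul _ d0,
        du_imc, e1, du_dv_comm h0]
    ring
  have EdvH : dv (fun w => hypLaplacian k f w + (k : ℂ) * f w) z
      = -(2 * (z.im : ℂ) * (du (du f) z + dv (dv f) z)
            + (z.im : ℂ) * (z.im : ℂ) * (dv (du (du f)) z + dv (dv (dv f)) z))
        + Complex.I * (k : ℂ) * ((du f z + Complex.I * dv f z)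
            + (z.im : ℂ) * (dv (du f) z + Complex.I * dv (dv f) z))
        + (k : ℂ) * dv f z := by
    have hH : (fun w => hypLaplacian k f w + (k : ℂ) * f w)
        = fun w => (-1 : ℂ) * ((w.im : ℂ) * (w.im : ℂ) * (du (du f) w + dv (dv f) w))
            + (Complex.I * (k : ℂ)) * ((w.im : ℂ) * (du f w + Complex.I * dv f w))
            + (k : ℂ) * f w := by
      funext w; unfold hypLaplacian; ring
    rw [hH]
    rw [dv_add (((((dimc.fun_mul dimc).fun_mul (d11.fun_add d22)).const_mul _)).fun_add
          ((dimc.fun_mul (d1.fun_add (d2.const_mul _))).const_mul _)) (d0.const_mul _),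
        dv_add (((dimc.fun_mul dimc).fun_mul (d11.fun_add d22)).const_mul _)
          ((dimc.fun_mul (d1.fun_add (d2.const_mul _))).const_mul _),
        dv_cmul _ ((dimc.fun_mul dimc).fun_mul (d11.fun_add d22)),
        dv_mul3 dimc dimc (d11.fun_add d22),
        dv_add d11 d22,
        dv_cmul _ (dimc.fun_mul (d1.fun_add (d2.const_mul _))),
        dv_mul dimc (d1.fun_add (d2.const_mul _)),
        dv_add d1 (d2.const_mul _),
        dv_cmul _ d2,
        dv_cmul _ d0,
        dv_imc]
    ring
  rw [show hypLaplacian (k + 2) (raiseOp k f) z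
      = -(z.im : ℂ) ^ 2 * (du (du (raiseOp k f)) z + dv (dv (raiseOp k f)) z)
        + Complex.I * ((k + 2 : ℝ) : ℂ) * (z.im : ℂ)
            * (du (raiseOp k f) z + Complex.I * dv (raiseOp k f) z) from rfl]
  rw [show raiseOp k (fun w => hypLaplacian k f w + (k : ℂ) * f w) z
      = Complex.I * du (fun w => hypLaplacian k f w + (k : ℂ) * f w) z
        + dv (fun w => hypLaplacian k f w + (k : ℂ) * f w) z
        + (k : ℂ) / (z.im : ℂ) * (hypLaplacian k f z + (k : ℂ) * f z) from rfl]
  rw [Edu2, Edv2, duR k hf hz, dvR k hf hz, EduH, EdvH]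
  rw [show hypLaplacian k f z
      = -(z.im : ℂ) ^ 2 * (du (du f) z + dv (dv f) z)
        + Complex.I * (k : ℂ) * (z.im : ℂ) * (du f z + Complex.I * dv f z) from rfl]
  have hvi : (z.im : ℂ) * ((z.im : ℂ))⁻¹ = 1 := mul_inv_cancel₀ hv
  push_cast
  linear_combination
    ((2:ℂ) * Complex.I * (k:ℂ) * du f z
      + (1:ℂ) * ((z.im:ℂ))⁻¹ * (k:ℂ) * (k:ℂ) * f z
      + (2:ℂ) * (z.im:ℂ) * ((z.im:ℂ))⁻¹ * (k:ℂ) * dv f z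
      + (-2:ℂ) * (z.im:ℂ) * ((z.im:ℂ))⁻¹ * ((z.im:ℂ))⁻¹ * (k:ℂ) * f z) * hvi
    + ((-1:ℂ) * (k:ℂ) * dv f z
      + (2:ℂ) * (z.im:ℂ) * dv (dv f) z
      + (2:ℂ) * (z.im:ℂ) * du (du f) z
      + (2:ℂ) * (z.im:ℂ) * Complex.I * dv (du f) z
      + (2:ℂ) * (z.im:ℂ) * ((z.im:ℂ))⁻¹ * (k:ℂ) * dv f z
      + (-2:ℂ) * (z.im:ℂ) * ((z.im:ℂ))⁻¹ * ((z.im:ℂ))⁻¹ * (k:ℂ) * f z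
      + (-1:ℂ) * (z.im:ℂ) * ((z.im:ℂ))⁻¹ * ((z.im:ℂ))⁻¹ * (k:ℂ) * (k:ℂ) * f z) * Complex.I_sq
lemma raiseOp_congr {k : ℝ} {h₁ h₂ : ℂ → ℂ} {z : ℂ} (h : h₁ =ᶠ[nhds z] h₂) :
    raiseOp k h₁ z = raiseOp k h₂ z := by
  unfold raiseOp
  rw [du_congr h, dv_congr h, h.self_of_nhds]

lemma raiseOp_linear (k : ℝ) {p q : ℂ → ℂ} {z : ℂ} (a b : ℂ)
    (hp : DifferentiableAt ℝ p z) (hq : DifferentiableAt ℝ q z) :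
    raiseOp k (fun w => a * p w + b * q w) z = a * raiseOp k p z + b * raiseOp k q z := by
  unfold raiseOp
  rw [du_add (hp.const_mul _) (hq.const_mul _), dv_add (hp.const_mul _) (hq.const_mul _),
      du_cmul _ hp, du_cmul _ hq, dv_cmul _ hp, dv_cmul _ hq]
  ring

lemma raiseIter_linear (k : ℝ) (n : ℕ) {p q : ℂ → ℂ} (hp : Sm p) (hq : Sm q) (a b : ℂ) :
    ∀ z : ℂ, 0 < z.im →
      raiseIter k n (fun w => a * p w + b * q w) z
        = a * raiseIter k n p z + b * raiseIter k n q z := by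
  induction n with
  | zero => intro z hz; rfl
  | succ n ih =>
    intro z hz
    show raiseOp (k + 2 * n) (raiseIter k n fun w => a * p w + b * q w) z = _
    rw [raiseOp_congr ((eventually_upper hz).mono fun w hw => ih w hw)]
    exact raiseOp_linear _ a b ((hp.raiseIter' k n z hz).diff) ((hq.raiseIter' k n z hz).diff)

lemma Sm_hypc (k : ℝ) (c : ℂ) {f : ℂ → ℂ} (hf : Sm f) :
    Sm (fun w => hypLaplacian k f w + c * f w) := by
  intro w hw
  have h : ContDiffAt ℝ NN
      (fun x : ℂ => -(x.im : ℂ) ^ 2 * (du (du f) x + dv (dv f) x)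
        + Complex.I * (k : ℂ) * (x.im : ℂ) * (du f x + Complex.I * dv f x) + c * f x) w :=
    ((((cd_imc w).pow 2).neg.mul ((hf.du'.du' w hw).add (hf.dv'.dv' w hw))).add
      (((contDiffAt_const.mul (cd_imc w))).mul
        ((hf.du' w hw).add (contDiffAt_const.mul (hf.dv' w hw))))).add
      (contDiffAt_const.mul (hf w hw))
  exact h

lemma main_induction {f : ℂ → ℂ} (hf : Sm f) (n : ℕ) :
    ∀ z : ℂ, 0 < z.im →
      hypLaplacian (3 / 2 + 2 * (n : ℝ)) (raiseIter (3 / 2) n f) z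
        = raiseIter (3 / 2) n
            (fun w => hypLaplacian (3 / 2) f w
              + ((n : ℂ) * (2 * (n : ℂ) + 1) / 2) * f w) z := by
  induction n with
  | zero =>
    intro z hz
    show hypLaplacian (3 / 2 + 2 * ((0 : ℕ) : ℝ)) f z
      = hypLaplacian (3 / 2) f z + (((0 : ℕ) : ℂ) * (2 * ((0 : ℕ) : ℂ) + 1) / 2) * f z
    norm_num
  | succ n ih =>
    intro z hz
    have hsm := hf.raiseIter' (3 / 2) n
    have hFn := Sm_hypc (3 / 2) ((n : ℂ) * (2 * (n : ℂ) + 1) / 2) hf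
    have ecast : (3 / 2 + 2 * (((n + 1 : ℕ)) : ℝ)) = (3 / 2 + 2 * (n : ℝ)) + 2 := by
      push_cast; ring
    rw [ecast]
    rw [show raiseIter (3 / 2) (n + 1) f
        = raiseOp (3 / 2 + 2 * (n : ℝ)) (raiseIter (3 / 2) n f) from rfl]
    rw [step (3 / 2 + 2 * (n : ℝ)) hsm hz]
    rw [show raiseIter (3 / 2) (n + 1)
          (fun w => hypLaplacian (3 / 2) f w
            + (((n + 1 : ℕ) : ℂ) * (2 * ((n + 1 : ℕ) : ℂ) + 1) / 2) * f w)
        = raiseOp (3 / 2 + 2 * (n : ℝ))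
            (raiseIter (3 / 2) n
              (fun w => hypLaplacian (3 / 2) f w
                + (((n + 1 : ℕ) : ℂ) * (2 * ((n + 1 : ℕ) : ℂ) + 1) / 2) * f w)) from rfl]
    apply raiseOp_congr
    refine (eventually_upper hz).mono fun w hw => ?_
    beta_reduce
    rw [ih w hw]
    have hcomb : (fun x => (1 : ℂ)
          * (fun w' => hypLaplacian (3 / 2) f w'
              + ((n : ℂ) * (2 * (n : ℂ) + 1) / 2) * f w') x
          + (((3 / 2 + 2 * (n : ℝ) : ℝ)) : ℂ) * f x)
        = (fun w => hypLaplacian (3 / 2) f w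
            + (((n + 1 : ℕ) : ℂ) * (2 * ((n + 1 : ℕ) : ℂ) + 1) / 2) * f w) := by
      funext x; push_cast; ring
    rw [← hcomb,
        raiseIter_linear (3 / 2) n hFn hf 1 (((3 / 2 + 2 * (n : ℝ) : ℝ)) : ℂ) w hw]
    ring
/-- For even positive `k`,
`Δ_{3/2+k} ∘ R_{3/2}^{k/2} = R_{3/2}^{k/2} ∘ (Δ_{3/2} + (k/4)(k+1))` on smooth
functions on the upper half-plane. -/
theorem laplacian_raiseIter_half_commutation (k : ℕ) (hk : 0 < k) (hke : Even k)
    (f : ℂ → ℂ) (hf : ContDiff ℝ (⊤ : ℕ∞) f) (z : ℂ) (hz : 0 < z.im) :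
    hypLaplacian (3 / 2 + (k : ℝ)) (raiseIter (3 / 2) (k / 2) f) z
      = raiseIter (3 / 2) (k / 2)
          (fun w => hypLaplacian (3 / 2) f w + (k : ℂ) / 4 * ((k : ℂ) + 1) * f w) z := by
  obtain ⟨m, rfl⟩ := hke
  have hSm : Sm f := fun w _ => hf.contDiffAt.of_le (by simp)
  have hdiv : (m + m) / 2 = m := by omega
  have hw1 : (3 / 2 + ((m + m : ℕ) : ℝ)) = 3 / 2 + 2 * (m : ℝ) := by push_cast; ring
  have hfun : (fun w => hypLaplacian (3 / 2) f w
        + ((m + m : ℕ) : ℂ) / 4 * (((m + m : ℕ) : ℂ) + 1) * f w)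
      = (fun w => hypLaplacian (3 / 2) f w
        + ((m : ℂ) * (2 * (m : ℂ) + 1) / 2) * f w) := by
    funext w; push_cast; ring
  rw [hdiv, hw1, hfun]
  exact main_induction hSm m z hz
end
end

section
/- Let N be a positive integer and L the lattice of integer matrices ((b, −a/N), (c, −b)) with a,b,c ∈ ℤ inside the quadratic space V of trace-zero rational 2×2 matrices with quadratic form Q(λ) = N·det(λ). Then the dual lattice of L with respect to the bilinear form (λ,μ) = −N tr(λμ) is L' = {((b/2N, −a/N), (c, −b/2N)) : a,b,c ∈ ℤ}, and the discriminant group L'/L is isomorphic to ℤ/2Nℤ with the induced ℚ/ℤ-valued quadratic form x ↦ −x²/4N. -/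
noncomputable section

/-- The lattice `L = {((b, -a/N), (c, -b)) : a, b, c ∈ ℤ}` inside the space of
trace-zero rational 2×2 matrices. -/
def latL (N : ℕ) : Set (Matrix (Fin 2) (Fin 2) ℚ) :=
  { m | ∃ a b c : ℤ, m = !![(b : ℚ), -(a : ℚ) / N; (c : ℚ), -(b : ℚ)] }

/-- The set `L' = {((b/2N, -a/N), (c, -b/2N)) : a, b, c ∈ ℤ}`. -/
def latL' (N : ℕ) : Set (Matrix (Fin 2) (Fin 2) ℚ) :=
  { m | ∃ a b c : ℤ, m = !![(b : ℚ) / (2 * N), -(a : ℚ) / N; (c : ℚ), -(b : ℚ) / (2 * N)] }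

/-- The bilinear form `(λ, μ) = -N tr(λμ)` associated to `Q(λ) = N det(λ)`. -/
def bilQ (N : ℕ) (x y : Matrix (Fin 2) (Fin 2) ℚ) : ℚ :=
  -(N : ℚ) * (x * y).trace

lemma gval (N : ℕ) (hN : 0 < N) (m : Matrix (Fin 2) (Fin 2) ℚ) (a b c : ℤ)
    (hm : m = !![(b : ℚ) / (2 * N), -(a : ℚ) / N; (c : ℚ), -(b : ℚ) / (2 * N)]) :
    (2 * (N : ℚ) * m 0 0).num = b := by
  have hN' : (N : ℚ) ≠ 0 := Nat.cast_ne_zero.mpr hN.ne'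
  subst hm
  rw [show (!![(b : ℚ) / (2 * N), -(a : ℚ) / N; (c : ℚ), -(b : ℚ) / (2 * N)]) 0 0
      = (b : ℚ) / (2 * N) from rfl]
  rw [show 2 * (N : ℚ) * ((b : ℚ) / (2 * N)) = (b : ℚ) by field_simp]
  exact Rat.num_intCast b

lemma dvd_of_zmod_eq (n : ℕ) (b1 b2 : ℤ) (h : (b1 : ZMod n) = (b2 : ZMod n)) :
    ∃ k : ℤ, b1 - b2 = n * k := by
  have : ((b1 - b2 : ℤ) : ZMod n) = 0 := by push_cast; rw [h]; ring
  exact (ZMod.intCast_zmod_eq_zero_iff_dvd _ _).mp this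

lemma zmod_eq_of_dvd (n : ℕ) (b1 b2 k : ℤ) (h : b1 - b2 = n * k) :
    (b1 : ZMod n) = (b2 : ZMod n) := by
  have : ((b1 - b2 : ℤ) : ZMod n) = 0 := by
    rw [h]; push_cast; simp
  have := sub_eq_zero.mp (by push_cast at this; exact this)
  exact this

/-- The dual lattice of `L` (inside `V`, the trace-zero rational matrices) with
respect to `(λ,μ) = -N tr(λμ)` is `L'`, and the discriminant group `L'/L` is
isomorphic to `ℤ/2Nℤ` with the `ℚ/ℤ`-valued quadratic form `x ↦ -x²/4N`: there
is a surjection `g : L' → ℤ/2Nℤ` identifying elements exactly modulo `L` and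
carrying `Q(λ) = N det(λ)` to `-x²/4N` modulo `ℤ`. -/
theorem dual_lattice_and_discriminant_group (N : ℕ) (hN : 0 < N) :
    ({ μ : Matrix (Fin 2) (Fin 2) ℚ |
        μ.trace = 0 ∧ ∀ l ∈ latL N, ∃ z : ℤ, bilQ N μ l = z } = latL' N) ∧
    ∃ g : latL' N → ZMod (2 * N),
      Function.Surjective g ∧
      (∀ x y : latL' N, g x = g y ↔
        ((x : Matrix (Fin 2) (Fin 2) ℚ) - (y : Matrix (Fin 2) (Fin 2) ℚ)) ∈ latL N) ∧
      (∀ x : latL' N, ∀ b : ℤ, (b : ZMod (2 * N)) = g x →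
        ∃ z : ℤ, (N : ℚ) * (x : Matrix (Fin 2) (Fin 2) ℚ).det
          = -(b : ℚ) ^ 2 / (4 * N) + z) := by
  have hN' : (N : ℚ) ≠ 0 := Nat.cast_ne_zero.mpr hN.ne'
  constructor
  · ext μ
    constructor
    · rintro ⟨htr, hint⟩
      have hs : μ 1 1 = -(μ 0 0) := by
        rw [Matrix.trace_fin_two] at htr; linarith
      obtain ⟨z1, hz1⟩ := hint !![(0 : ℚ), -(1 : ℚ)/N; 0, 0] ⟨1, 0, 0, by norm_num⟩
      obtain ⟨z2, hz2⟩ := hint !![(1 : ℚ), 0; 0, -1] ⟨0, 1, 0, by norm_num⟩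
      obtain ⟨z3, hz3⟩ := hint !![(0 : ℚ), 0; 1, 0] ⟨0, 0, 1, by norm_num⟩
      simp [bilQ, Matrix.trace_fin_two, Matrix.mul_apply, Fin.sum_univ_two, hs]
        at hz1 hz2 hz3
      have e1 : μ 1 0 = (z1 : ℚ) := by
        field_simp at hz1
        linarith
      refine ⟨z3, -z2, z1, ?_⟩
      ext i j
      fin_cases i <;> fin_cases j
      · show μ 0 0 = ((-z2 : ℤ) : ℚ) / (2 * N)
        push_cast
        field_simp
        linarith
      · show μ 0 1 = -(z3 : ℚ) / N
        field_simp
        linarith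
      · show μ 1 0 = (z1 : ℚ)
        exact e1
      · show μ 1 1 = -((-z2 : ℤ) : ℚ) / (2 * N)
        rw [hs]
        push_cast
        field_simp
        linarith
    · rintro ⟨a, b, c, rfl⟩
      refine ⟨by rw [Matrix.trace_fin_two]; simp; ring, ?_⟩
      rintro l ⟨A, B, C, rfl⟩
      refine ⟨-b * B + a * C + c * A, ?_⟩
      simp [bilQ, Matrix.trace_fin_two, Matrix.mul_apply, Fin.sum_univ_two]
      push_cast
      field_simp
      ring
  · haveI : NeZero (2 * N) := ⟨by omega⟩
    refine ⟨fun x => ((2 * (N : ℚ) * (x : Matrix (Fin 2) (Fin 2) ℚ) 0 0).num : ZMod (2 * N)),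
      ?_, ?_, ?_⟩
    · intro t
      refine ⟨⟨!![((t.val : ℤ) : ℚ) / (2 * N), -((0 : ℤ) : ℚ) / N;
          ((0 : ℤ) : ℚ), -((t.val : ℤ) : ℚ) / (2 * N)], 0, (t.val : ℤ), 0, rfl⟩, ?_⟩
      show (((2 * (N : ℚ) * (!![((t.val : ℤ) : ℚ) / (2 * N), -((0 : ℤ) : ℚ) / N;
          ((0 : ℤ) : ℚ), -((t.val : ℤ) : ℚ) / (2 * N)]) 0 0).num : ℤ) : ZMod (2 * N)) = t
      rw [gval N hN _ 0 (t.val : ℤ) 0 rfl]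
      push_cast
      simp [ZMod.natCast_val, ZMod.cast_id]
    · rintro ⟨x, hx⟩ ⟨y, hy⟩
      obtain ⟨a1, b1, c1, h1⟩ := hx
      obtain ⟨a2, b2, c2, h2⟩ := hy
      show (((2 * (N : ℚ) * x 0 0).num : ℤ) : ZMod (2 * N))
          = (((2 * (N : ℚ) * y 0 0).num : ℤ) : ZMod (2 * N)) ↔ x - y ∈ latL N
      rw [gval N hN x a1 b1 c1 h1, gval N hN y a2 b2 c2 h2]
      constructor
      · intro h
        obtain ⟨k, hk⟩ := dvd_of_zmod_eq (2 * N) b1 b2 h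
        have hk' : (b1 : ℚ) - b2 = 2 * N * k := by
          exact_mod_cast congrArg (Int.cast : ℤ → ℚ) hk
        refine ⟨a1 - a2, k, c1 - c2, ?_⟩
        rw [h1, h2]
        ext i j
        have hE : (b1 : ℚ) / (2 * N) - (b2 : ℚ) / (2 * N) = (k : ℚ) := by
          rw [div_sub_div_same, hk']
          field_simp
        fin_cases i <;> fin_cases j
        · show (b1 : ℚ) / (2 * N) - (b2 : ℚ) / (2 * N) = ((k : ℤ) : ℚ)
          exact hE
        · show -(a1 : ℚ) / N - -(a2 : ℚ) / N = -((a1 - a2 : ℤ) : ℚ) / N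
          push_cast
          ring
        · show (c1 : ℚ) - (c2 : ℚ) = ((c1 - c2 : ℤ) : ℚ)
          push_cast
          ring
        · show -(b1 : ℚ) / (2 * N) - -(b2 : ℚ) / (2 * N) = -((k : ℤ) : ℚ)
          rw [neg_div, neg_div]
          linarith
      · rintro ⟨A, B, C, hm⟩
        have h00 := congrFun (congrFun hm 0) 0
        rw [h1, h2] at h00
        rw [show ((!![(b1 : ℚ) / (2 * N), -(a1 : ℚ) / N; (c1 : ℚ), -(b1 : ℚ) / (2 * N)]
            - !![(b2 : ℚ) / (2 * N), -(a2 : ℚ) / N; (c2 : ℚ), -(b2 : ℚ) / (2 * N)]) 0 0)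
            = (b1 : ℚ) / (2 * N) - (b2 : ℚ) / (2 * N) from rfl] at h00
        rw [show ((!![(B : ℚ), -(A : ℚ) / N; (C : ℚ), -(B : ℚ)]) 0 0) = (B : ℚ) from rfl] at h00
        have hq : (b1 : ℚ) - b2 = (((2 * N : ℕ) : ℤ) : ℚ) * B := by
          push_cast
          field_simp at h00
          linarith
        have hz : b1 - b2 = ((2 * N : ℕ) : ℤ) * B := by exact_mod_cast hq
        exact zmod_eq_of_dvd (2 * N) b1 b2 B hz
    · rintro ⟨x, hx⟩ b hb
      obtain ⟨a1, b1, c1, h1⟩ := hx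
      have hb' : (b : ZMod (2 * N)) = (((2 * (N : ℚ) * x 0 0).num : ℤ) : ZMod (2 * N)) := hb
      rw [gval N hN x a1 b1 c1 h1] at hb'
      obtain ⟨k, hk⟩ := dvd_of_zmod_eq (2 * N) b1 b hb'.symm
      have hb1 : (b1 : ℚ) = b + 2 * N * k := by
        have h' : (b1 : ℚ) - b = (((2 * N : ℕ) : ℤ) : ℚ) * k := by
          exact_mod_cast congrArg (Int.cast : ℤ → ℚ) hk
        push_cast at h'
        linarith
      refine ⟨a1 * c1 - k * b - N * k ^ 2, ?_⟩
      show (N : ℚ) * x.det = -(b : ℚ) ^ 2 / (4 * N) + ((a1 * c1 - k * b - N * k ^ 2 : ℤ) : ℚ)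
      rw [h1, Matrix.det_fin_two]
      rw [show (!![(b1 : ℚ) / (2 * N), -(a1 : ℚ) / N; (c1 : ℚ), -(b1 : ℚ) / (2 * N)]) 0 0
          = (b1 : ℚ) / (2 * N) from rfl,
        show (!![(b1 : ℚ) / (2 * N), -(a1 : ℚ) / N; (c1 : ℚ), -(b1 : ℚ) / (2 * N)]) 0 1
          = -(a1 : ℚ) / N from rfl,
        show (!![(b1 : ℚ) / (2 * N), -(a1 : ℚ) / N; (c1 : ℚ), -(b1 : ℚ) / (2 * N)]) 1 0
          = (c1 : ℚ) from rfl,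
        show (!![(b1 : ℚ) / (2 * N), -(a1 : ℚ) / N; (c1 : ℚ), -(b1 : ℚ) / (2 * N)]) 1 1
          = -(b1 : ℚ) / (2 * N) from rfl]
      rw [hb1]
      push_cast
      field_simp
      ring
end
end
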